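/- arXiv:2109.09728 — 2 statements merged into one kernel-verified Lean document; each statement's English description precedes it below -/
import Mathlib

section
/- Let α₁, α₂, α₃ ∈ ℝ with α₁α₂ + α₂α₃ + α₃α₁ ≥ 0, and let A = Circ(α₁, α₂, α₃) be the 3×3 circulant matrix with first row (α₁, α₂, α₃). Then the spectral norm of A equals |α₁ + α₂ + α₃|. -/
/-!
Writing `s = α₁ + α₂ + α₃` and `e = α₁α₂ + α₂α₃ + α₃α₁`, the circulant `A` satisfies the identity
`‖A x‖² = s² ‖x‖² - e ((x₀ - x₁)² + (x₁ - x₂)² + (x₂ - x₀)²)`.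
For `e ≥ 0` this bounds `‖A x‖` by `|s| ‖x‖`, with equality at `x = (1, 1, 1)`.
-/

open scoped BigOperators ENNReal

/-- The `ℓ^p` norm of a vector in `ℝⁿ`, for `p ∈ [1, ∞]`. -/
noncomputable def vecPNorm {n : ℕ} (p : ℝ≥0∞) (x : Fin n → ℝ) : ℝ :=
  if p = ∞ then ⨆ i, |x i| else (∑ i, |x i| ^ p.toReal) ^ (1 / p.toReal)

/-- The operator norm of a matrix acting on `(ℝⁿ, ‖·‖_p)`,
    i.e. `sup_{x ≠ 0} ‖Ax‖_p / ‖x‖_p`. -/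
noncomputable def matPNorm {n : ℕ} (p : ℝ≥0∞) (A : Matrix (Fin n) (Fin n) ℝ) : ℝ :=
  sSup {r : ℝ | ∃ x : Fin n → ℝ, x ≠ 0 ∧ r = vecPNorm p (A.mulVec x) / vecPNorm p x}

/-- The circulant matrix `A(n, a, b)` with `a` on the diagonal and `b` elsewhere. -/
def circA (n : ℕ) (a b : ℝ) : Matrix (Fin n) (Fin n) ℝ :=
  Matrix.of fun i j => if i = j then a else b

open Matrix

lemma vecPNorm_two {n : ℕ} (x : Fin n → ℝ) : vecPNorm 2 x = √(∑ i, x i ^ 2) := by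
  have h2 : (2 : ℝ≥0∞).toReal = 2 := by simp
  simp only [vecPNorm, if_neg ENNReal.ofNat_ne_top, h2, Real.sqrt_eq_rpow, one_div]
  congr 1
  refine Finset.sum_congr rfl fun i _ => ?_
  rw [Real.rpow_two, sq_abs]

lemma vecPNorm_two_pos {n : ℕ} {x : Fin n → ℝ} (hx : x ≠ 0) : 0 < vecPNorm 2 x := by
  obtain ⟨i, hi⟩ := Function.ne_iff.mp hx
  rw [vecPNorm_two, Real.sqrt_pos]
  exact Finset.sum_pos' (fun j _ => sq_nonneg (x j))
    ⟨i, Finset.mem_univ i, pow_two_pos_of_ne_zero hi⟩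

lemma matPNorm_two_eq_of_sum_sq {n : ℕ} (A : Matrix (Fin n) (Fin n) ℝ) {c : ℝ} (hc : 0 ≤ c)
    (hle : ∀ x, ∑ i, (A *ᵥ x) i ^ 2 ≤ c ^ 2 * ∑ i, x i ^ 2)
    {x₀ : Fin n → ℝ} (hx₀ : x₀ ≠ 0) (heq : ∑ i, (A *ᵥ x₀) i ^ 2 = c ^ 2 * ∑ i, x₀ i ^ 2) :
    matPNorm 2 A = c := by
  have hratio : ∀ x, x ≠ 0 → vecPNorm 2 (A *ᵥ x) / vecPNorm 2 x ≤ c := fun x hx => by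
    rw [div_le_iff₀ (vecPNorm_two_pos hx), vecPNorm_two, vecPNorm_two,
      ← Real.sqrt_sq hc, ← Real.sqrt_mul (sq_nonneg c)]
    exact Real.sqrt_le_sqrt (hle x)
  have hattained : vecPNorm 2 (A *ᵥ x₀) / vecPNorm 2 x₀ = c := by
    rw [div_eq_iff (vecPNorm_two_pos hx₀).ne', vecPNorm_two, vecPNorm_two, heq,
      Real.sqrt_mul (sq_nonneg c), Real.sqrt_sq hc]
  exact IsGreatest.csSup_eq ⟨⟨x₀, hx₀, hattained.symm⟩, by
    rintro r ⟨x, hx, rfl⟩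
    exact hratio x hx⟩

lemma sum_sq_mulVec_circulant_three (α₁ α₂ α₃ : ℝ) (x : Fin 3 → ℝ) :
    ∑ i, (!![α₁, α₂, α₃; α₃, α₁, α₂; α₂, α₃, α₁] *ᵥ x) i ^ 2 =
      (α₁ + α₂ + α₃) ^ 2 * ∑ i, x i ^ 2 - (α₁ * α₂ + α₂ * α₃ + α₃ * α₁) *
        ((x 0 - x 1) ^ 2 + (x 1 - x 2) ^ 2 + (x 2 - x 0) ^ 2) := by
  simp only [mulVec, dotProduct, of_apply, cons_val', cons_val_fin_one, Fin.sum_univ_three,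
    cons_val_zero, cons_val_one, cons_val]
  ring

theorem stmt_8 (α₁ α₂ α₃ : ℝ) (h : 0 ≤ α₁ * α₂ + α₂ * α₃ + α₃ * α₁) :
    matPNorm 2 !![α₁, α₂, α₃; α₃, α₁, α₂; α₂, α₃, α₁] = |α₁ + α₂ + α₃| := by
  refine matPNorm_two_eq_of_sum_sq _ (abs_nonneg _) (fun x => ?_) one_ne_zero ?_
  · rw [sum_sq_mulVec_circulant_three, sq_abs]
    exact sub_le_self _ (mul_nonneg h (by positivity))
  · rw [sum_sq_mulVec_circulant_three]
    simp
end

section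
/- Let a, b ≥ 0 with (n−2)b ≤ 2a, and let A = A(n,-a,b) be the n×n matrix with -a on the diagonal and b elsewhere. For 2 ≤ p < ∞, the induced p-norm of A satisfies a + b ≤ ‖A‖_p ≤ n^{1/2 − 1/p}(a + b). -/
/-!
Write `A = b J - (a + b) I` with `J` the all-ones matrix. On vectors with coordinate sum zero, `A`
acts as `-(a + b)`, which gives the lower bound. For the upper bound, with `s = ∑ xᵢ`,
`‖A x‖₂² = (a + b)² ‖x‖₂² - b s² (2 (a + b) - n b) ≤ (a + b)² ‖x‖₂²` because `(n - 2) b ≤ 2 a`;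
the comparison `‖y‖_p ≤ ‖y‖₂ ≤ n^(1/2 - 1/p) ‖y‖_p` of norms on `ℝⁿ` then costs the factor
`n^(1/2 - 1/p)`.
-/

open scoped BigOperators ENNReal

open Matrix

theorem Real.sum_rpow_le_rpow_sum {ι : Type*} (s : Finset ι) {f : ι → ℝ}
    (hf : ∀ i ∈ s, 0 ≤ f i) {r : ℝ} (hr : 1 ≤ r) : ∑ i ∈ s, f i ^ r ≤ (∑ i ∈ s, f i) ^ r := by
  classical
  induction s using Finset.induction_on with
  | empty => simp [Real.zero_rpow (by linarith : r ≠ 0)]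
  | insert j s hj ih =>
    rw [Finset.forall_mem_insert] at hf
    rw [Finset.sum_insert hj, Finset.sum_insert hj]
    calc f j ^ r + ∑ i ∈ s, f i ^ r ≤ f j ^ r + (∑ i ∈ s, f i) ^ r := by gcongr; exact ih hf.2
      _ ≤ (f j + ∑ i ∈ s, f i) ^ r :=
        Real.add_rpow_le_rpow_add hf.1 (Finset.sum_nonneg hf.2) hr

lemma abs_rpow_eq_rpow_rpow {p q : ℝ} (hp : 0 < p) (y : ℝ) : |y| ^ q = (|y| ^ p) ^ (q / p) := by
  rw [← Real.rpow_mul (abs_nonneg y), mul_div_cancel₀ q hp.ne']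

lemma exists_ne_zero_sum_eq_zero {ι : Type*} [Fintype ι] [Nontrivial ι] :
    ∃ x : ι → ℝ, x ≠ 0 ∧ ∑ i, x i = 0 := by
  classical
  obtain ⟨i, j, hij⟩ := exists_pair_ne ι
  refine ⟨Pi.single i 1 - Pi.single j 1, fun h => ?_, by simp⟩
  simpa [hij] using congrFun h i

section vecPNorm

variable {n : ℕ}

lemma vecPNorm_nonneg (p : ℝ≥0∞) (x : Fin n → ℝ) : 0 ≤ vecPNorm p x := by
  unfold vecPNorm
  split_ifs
  exacts [Real.iSup_nonneg fun i => abs_nonneg _, by positivity]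

lemma vecPNorm_eq_norm_toLp {p : ℝ≥0∞} (hp : p ≠ 0) (x : Fin n → ℝ) :
    vecPNorm p x = ‖WithLp.toLp p x‖ := by
  unfold vecPNorm
  split_ifs with htop
  · subst htop
    rfl
  · rw [PiLp.norm_eq_sum (ENNReal.toReal_pos hp htop)]
    rfl

section OneLE

variable {p : ℝ≥0∞} [Fact (1 ≤ p)]

lemma vecPNorm_smul (c : ℝ) (x : Fin n → ℝ) : vecPNorm p (c • x) = |c| * vecPNorm p x := by
  have hp : p ≠ 0 := (zero_lt_one.trans_le Fact.out).ne'
  rw [vecPNorm_eq_norm_toLp hp, vecPNorm_eq_norm_toLp hp, WithLp.toLp_smul, norm_smul,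
    Real.norm_eq_abs]

lemma vecPNorm_pos {x : Fin n → ℝ} (hx : x ≠ 0) : 0 < vecPNorm p x := by
  rw [vecPNorm_eq_norm_toLp (zero_lt_one.trans_le Fact.out).ne']
  exact norm_pos_iff.2 ((WithLp.toLp_eq_zero p).not.2 hx)

end OneLE

lemma vecPNorm_ofReal {p : ℝ} (hp : 0 < p) (x : Fin n → ℝ) :
    vecPNorm (ENNReal.ofReal p) x = (∑ i, |x i| ^ p) ^ (1 / p) := by
  rw [vecPNorm, if_neg ENNReal.ofReal_ne_top, ENNReal.toReal_ofReal hp.le]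

lemma vecPNorm_ofReal_two (x : Fin n → ℝ) :
    vecPNorm (ENNReal.ofReal 2) x = √(∑ i, x i ^ 2) := by
  simp only [vecPNorm_ofReal two_pos, Real.rpow_two, sq_abs, Real.sqrt_eq_rpow]

lemma vecPNorm_ofReal_antitone {p q : ℝ} (hp : 0 < p) (hpq : p ≤ q) (x : Fin n → ℝ) :
    vecPNorm (ENNReal.ofReal q) x ≤ vecPNorm (ENNReal.ofReal p) x := by
  have hq : 0 < q := hp.trans_le hpq
  set t : Fin n → ℝ := fun i => |x i| ^ p
  have ht : ∀ i ∈ Finset.univ, 0 ≤ t i := fun i _ => by positivity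
  have hsum : ∑ i, |x i| ^ q ≤ (∑ i, t i) ^ (q / p) := by
    rw [Finset.sum_congr rfl fun i _ => abs_rpow_eq_rpow_rpow (q := q) hp (x i)]
    exact Real.sum_rpow_le_rpow_sum _ ht ((one_le_div hp).2 hpq)
  rw [vecPNorm_ofReal hp, vecPNorm_ofReal hq]
  calc (∑ i, |x i| ^ q) ^ (1 / q) ≤ ((∑ i, t i) ^ (q / p)) ^ (1 / q) := by gcongr
    _ = (∑ i, t i) ^ (1 / p) := by
      rw [← Real.rpow_mul (Finset.sum_nonneg ht)]
      congr 1
      field_simp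

lemma vecPNorm_ofReal_le_card_rpow_mul {p q : ℝ} (hp : 0 < p) (hpq : p ≤ q) (x : Fin n → ℝ) :
    vecPNorm (ENNReal.ofReal p) x ≤ (n : ℝ) ^ (1 / p - 1 / q) * vecPNorm (ENNReal.ofReal q) x := by
  have hq : 0 < q := hp.trans_le hpq
  set t : Fin n → ℝ := fun i => |x i| ^ p
  have ht : ∀ i ∈ Finset.univ, 0 ≤ t i := fun i _ => by positivity
  have hsum : (∑ i, t i) ^ (q / p) ≤ (n : ℝ) ^ (q / p - 1) * ∑ i, |x i| ^ q := by
    rw [Finset.sum_congr rfl fun i _ => abs_rpow_eq_rpow_rpow (q := q) hp (x i)]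
    simpa using
      Real.rpow_sum_le_const_mul_sum_rpow_of_nonneg Finset.univ ((one_le_div hp).2 hpq) ht
  rw [vecPNorm_ofReal hp, vecPNorm_ofReal hq]
  calc (∑ i, t i) ^ (1 / p) = ((∑ i, t i) ^ (q / p)) ^ (1 / q) := by
        rw [← Real.rpow_mul (Finset.sum_nonneg ht)]
        congr 1
        field_simp
    _ ≤ ((n : ℝ) ^ (q / p - 1) * ∑ i, |x i| ^ q) ^ (1 / q) := by gcongr
    _ = (n : ℝ) ^ (1 / p - 1 / q) * (∑ i, |x i| ^ q) ^ (1 / q) := by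
      rw [Real.mul_rpow (by positivity) (by positivity), ← Real.rpow_mul (by positivity)]
      congr 2
      field_simp

end vecPNorm

section matPNorm

variable {n : ℕ} {p : ℝ≥0∞} {A : Matrix (Fin n) (Fin n) ℝ} {M : ℝ}

lemma matPNorm_le_of_le_mul (hM : 0 ≤ M) (hA : ∀ x, vecPNorm p (A *ᵥ x) ≤ M * vecPNorm p x) :
    matPNorm p A ≤ M := by
  refine Real.sSup_le ?_ hM
  rintro r ⟨x, -, rfl⟩
  exact div_le_of_le_mul₀ (vecPNorm_nonneg p x) hM (hA x)

lemma le_matPNorm_of_le_mul (hM : 0 ≤ M) (hA : ∀ x, vecPNorm p (A *ᵥ x) ≤ M * vecPNorm p x)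
    {x : Fin n → ℝ} (hx : x ≠ 0) : vecPNorm p (A *ᵥ x) / vecPNorm p x ≤ matPNorm p A := by
  refine le_csSup ⟨M, ?_⟩ ⟨x, hx, rfl⟩
  rintro r ⟨y, -, rfl⟩
  exact div_le_of_le_mul₀ (vecPNorm_nonneg p y) hM (hA y)

end matPNorm

section circA

variable {n : ℕ}

lemma circA_mulVec_apply (c b : ℝ) (x : Fin n → ℝ) (i : Fin n) :
    (circA n c b *ᵥ x) i = b * ∑ j, x j + (c - b) * x i := by
  have hentry : ∀ j, circA n c b i j = b + if i = j then c - b else 0 := fun j => by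
    by_cases h : i = j <;> simp [circA, h]
  simp only [Matrix.mulVec, dotProduct, hentry, add_mul, Finset.sum_add_distrib, ite_mul,
    zero_mul, Finset.sum_ite_eq, Finset.mem_univ, if_true, Finset.mul_sum]

lemma circA_mulVec_of_sum_eq_zero (c b : ℝ) {x : Fin n → ℝ} (hx : ∑ j, x j = 0) :
    circA n c b *ᵥ x = (c - b) • x := by
  ext i
  simp [circA_mulVec_apply, hx]

variable {a b : ℝ}

lemma sum_sq_circA_mulVec_le (hb : 0 ≤ b) (hcase : ((n : ℝ) - 2) * b ≤ 2 * a)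
    (x : Fin n → ℝ) : ∑ i, (circA n (-a) b *ᵥ x) i ^ 2 ≤ (a + b) ^ 2 * ∑ i, x i ^ 2 := by
  set s := ∑ j, x j
  have hexpand : ∑ i, (circA n (-a) b *ᵥ x) i ^ 2
      = b * s ^ 2 * (n * b - 2 * (a + b)) + (a + b) ^ 2 * ∑ i, x i ^ 2 := by
    simp only [circA_mulVec_apply]
    have h : ∀ i, (b * s + (-a - b) * x i) ^ 2
        = b ^ 2 * s ^ 2 - 2 * b * (a + b) * s * x i + (a + b) ^ 2 * x i ^ 2 := fun i => by ring
    rw [Finset.sum_congr rfl fun i _ => h i, Finset.sum_add_distrib, Finset.sum_sub_distrib,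
      Finset.sum_const, Finset.card_univ, Fintype.card_fin, nsmul_eq_mul, ← Finset.mul_sum,
      ← Finset.mul_sum]
    ring
  have hcross : b * s ^ 2 * (n * b - 2 * (a + b)) ≤ 0 :=
    mul_nonpos_of_nonneg_of_nonpos (by positivity) (by linarith)
  linarith

lemma vecPNorm_two_circA_mulVec_le (hab : 0 ≤ a + b) (hb : 0 ≤ b)
    (hcase : ((n : ℝ) - 2) * b ≤ 2 * a) (x : Fin n → ℝ) :
    vecPNorm (ENNReal.ofReal 2) (circA n (-a) b *ᵥ x)
      ≤ (a + b) * vecPNorm (ENNReal.ofReal 2) x := by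
  rw [vecPNorm_ofReal_two, vecPNorm_ofReal_two, ← Real.sqrt_sq hab,
    ← Real.sqrt_mul (sq_nonneg _)]
  exact Real.sqrt_le_sqrt (sum_sq_circA_mulVec_le hb hcase x)

lemma vecPNorm_circA_mulVec_le (ha : 0 ≤ a) (hb : 0 ≤ b) (hcase : ((n : ℝ) - 2) * b ≤ 2 * a)
    {p : ℝ} (hp : 2 ≤ p) (x : Fin n → ℝ) :
    vecPNorm (ENNReal.ofReal p) (circA n (-a) b *ᵥ x)
      ≤ (n : ℝ) ^ ((1 : ℝ) / 2 - 1 / p) * (a + b) * vecPNorm (ENNReal.ofReal p) x := by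
  calc vecPNorm (ENNReal.ofReal p) (circA n (-a) b *ᵥ x)
      ≤ vecPNorm (ENNReal.ofReal 2) (circA n (-a) b *ᵥ x) :=
        vecPNorm_ofReal_antitone two_pos hp _
    _ ≤ (a + b) * vecPNorm (ENNReal.ofReal 2) x :=
        vecPNorm_two_circA_mulVec_le (add_nonneg ha hb) hb hcase x
    _ ≤ (a + b) * ((n : ℝ) ^ ((1 : ℝ) / 2 - 1 / p) * vecPNorm (ENNReal.ofReal p) x) := by
        gcongr
        exact vecPNorm_ofReal_le_card_rpow_mul two_pos hp x
    _ = (n : ℝ) ^ ((1 : ℝ) / 2 - 1 / p) * (a + b) * vecPNorm (ENNReal.ofReal p) x := by ring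

end circA

theorem stmt_14 (n : ℕ) (hn : 2 ≤ n) (a b : ℝ) (ha : 0 ≤ a) (hb : 0 ≤ b)
    (hcase : ((n : ℝ) - 2) * b ≤ 2 * a) (p : ℝ) (hp : 2 ≤ p) :
    a + b ≤ matPNorm (ENNReal.ofReal p) (circA n (-a) b) ∧
      matPNorm (ENNReal.ofReal p) (circA n (-a) b) ≤
        (n : ℝ) ^ ((1 : ℝ) / 2 - 1 / p) * (a + b) := by
  have : Fact (1 ≤ ENNReal.ofReal p) := ⟨ENNReal.one_le_ofReal.2 (by linarith)⟩
  have : Nontrivial (Fin n) := Fin.nontrivial_iff_two_le.2 hn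
  have hM : 0 ≤ (n : ℝ) ^ ((1 : ℝ) / 2 - 1 / p) * (a + b) := by positivity
  have hA := vecPNorm_circA_mulVec_le ha hb hcase hp
  obtain ⟨z, hz, hsum⟩ := exists_ne_zero_sum_eq_zero (ι := Fin n)
  refine ⟨?_, matPNorm_le_of_le_mul hM hA⟩
  calc a + b
      = vecPNorm (ENNReal.ofReal p) (circA n (-a) b *ᵥ z) / vecPNorm (ENNReal.ofReal p) z := by
        rw [circA_mulVec_of_sum_eq_zero _ _ hsum, vecPNorm_smul, mul_div_assoc,
          div_self (vecPNorm_pos hz).ne', mul_one, show -a - b = -(a + b) by ring, abs_neg,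
          abs_of_nonneg (add_nonneg ha hb)]
    _ ≤ matPNorm (ENNReal.ofReal p) (circA n (-a) b) := le_matPNorm_of_le_mul hM hA hz
end
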